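/- Let f and g be slice regular functions on a symmetric domain Ω_D ⊂ ℍ. Then for all x ∈ Ω_D ∖ ℝ: (∂_c ∂_s)(f·g) = (∂_c ∂_s f)·(v_s g) + (1/2)[(∂_s f)·(∂_c g) + (∂_c f)·(∂_s g)] + (v_s f)·(∂_c ∂_s g). -/

import Mathlib

noncomputable section

open Quaternion

abbrev ℍq := Quaternion ℝ

/-- Spherical value of a function of a quaternionic variable. -/
def svalue (f : ℍq → ℍq) (x : ℍq) : ℍq := (f x + f (star x)) / 2

/-- Spherical derivative of a function of a quaternionic variable. -/
def sderiv' (f : ℍq → ℍq) (x : ℍq) : ℍq := (2 * x.im)⁻¹ * (f x - f (star x))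

/-- The imaginary unit `Im(x)/|Im(x)|` attached to a (non-real) quaternion. -/
def qJ (x : ℍq) : ℍq := (‖x.im‖)⁻¹ • x.im

/-- Slice (Cullen) derivative `∂_c f = (1/2)(∂/∂α − I ∂/∂β) f` at `x = α + Iβ`. -/
def cderiv (f : ℍq → ℍq) (x : ℍq) : ℍq :=
  (1/2 : ℝ) • (fderiv ℝ f x 1 - qJ x * fderiv ℝ f x (qJ x))

/-- The conjugate operator `∂̄_c f = (1/2)(∂/∂α + I ∂/∂β) f`. -/
def cderivBar (f : ℍq → ℍq) (x : ℍq) : ℍq :=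
  (1/2 : ℝ) • (fderiv ℝ f x 1 + qJ x * fderiv ℝ f x (qJ x))

/-- A circular (axially symmetric) subset of the quaternions. -/
def IsCircular (Ω : Set ℍq) : Prop :=
  ∀ x ∈ Ω, ∀ y : ℍq, y.re = x.re → ‖y.im‖ = ‖x.im‖ → y ∈ Ω

/-- A slice function on `Ω`: it is determined by the representation formula
`f(α + Iβ) = F₀(α,β) + I F₁(α,β)` with `F₀ = v_s f`, `F₁ = β ∂_s f`. -/
def IsSlice (Ω : Set ℍq) (f : ℍq → ℍq) : Prop :=
  ∀ x ∈ Ω, ∀ y ∈ Ω, x.re = y.re → ‖x.im‖ = ‖y.im‖ →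
    f x = svalue f y + x.im * sderiv' f y

/-- A slice regular function on a circular domain: a real-differentiable slice
function whose stem function is holomorphic, i.e. `∂̄_c f = 0` off the reals. -/
def IsSliceRegular (Ω : Set ℍq) (f : ℍq → ℍq) : Prop :=
  IsSlice Ω f ∧ DifferentiableOn ℝ f Ω ∧ ∀ x ∈ Ω, x.im ≠ 0 → cderivBar f x = 0

/-- Pointwise formula for the slice product `f·g = 𝓘(FG)` of two slice functions. -/
def sprod (f g : ℍq → ℍq) (x : ℍq) : ℍq :=
  svalue f x * svalue g x + x.im * x.im * (sderiv' f x * sderiv' g x)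
    + x.im * (svalue f x * sderiv' g x + sderiv' f x * svalue g x)

/-- Characteristic polynomial of `q₀`: `Δ_{q₀}(x) = x² − 2 Re(q₀) x + |q₀|²`. -/
def Delta (q₀ : ℍq) (x : ℍq) : ℍq := x ^ 2 - 2 * (q₀.re : ℍq) * x + ((‖q₀‖ ^ 2 : ℝ) : ℍq)

/-- The operator `∂_c ∂_s`. -/
def opCS (f : ℍq → ℍq) : ℍq → ℍq := cderiv (sderiv' f)

/-- The operator `∂_s ∂_c`. -/
def opSC (f : ℍq → ℍq) : ℍq → ℍq := sderiv' (cderiv f)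

/-!
Off the real axis every function satisfies `f = v_s f + Im(x) ∂_s f`, where `v_s f` and `∂_s f`
are invariant under `x ↦ x^c`. For such an invariant `h` the slice derivative splits as
`v_s(∂_c h) = ½ ∂h(1)` and `∂_s(∂_c h) = ½ Im(x)⁻² ∂h(Im x)`, while for slice regular `f` one
has `∂_c f = ∂f(1) = ∂(v_s f)(1) + Im(x) ∂(∂_s f)(1)`, and adding the Cauchy–Riemann equations
at `x` and `x^c` gives `∂(v_s f)(Im x) = Im(x)² ∂(∂_s f)(1)`. Since
`∂_s(f·g) = v_s f ∂_s g + ∂_s f v_s g`, the Leibniz rule expresses both sides through these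
quantities, and the identity becomes an algebraic one in which `Im(x)² = -|Im x|²` is real,
hence central.
-/

instance : StarModule ℝ ℍq := ⟨fun r a => by ext <;> simp⟩

lemma coe_two : ((2 : ℝ) : ℍq) = 2 := QuaternionAlgebra.coe_ofNat

instance : NeZero (2 : ℍq) :=
  ⟨by rw [← coe_two, ← Quaternion.coe_zero, Ne, Quaternion.coe_inj]; norm_num⟩

lemma div_two_eq_smul (q : ℍq) : q / 2 = (2⁻¹ : ℝ) • q := by
  rw [div_eq_mul_inv, ← coe_two, ← Quaternion.coe_inv, Quaternion.mul_coe_eq_smul]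

lemma two_inv_mul_eq_smul (q : ℍq) : (2 : ℍq)⁻¹ * q = (2⁻¹ : ℝ) • q := by
  rw [← coe_two, ← Quaternion.coe_inv, Quaternion.coe_mul_eq_smul]

lemma im_mul_im (x : ℍq) : x.im * x.im = ((-normSq x.im : ℝ) : ℍq) := by
  rw [← sq, Quaternion.im_sq, Quaternion.coe_neg]

lemma im_star_eq_star_im (x : ℍq) : (star x).im = star x.im := by
  rw [Quaternion.im_star, Quaternion.star_im]

def imCLM : ℍq →L[ℝ] ℍq :=
  LinearMap.toContinuousLinearMap
    { toFun := Quaternion.im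
      map_add' := Quaternion.im_add
      map_smul' := fun r a => Quaternion.im_smul a r }

@[simp] lemma imCLM_apply (x : ℍq) : imCLM x = x.im := rfl

lemma hasFDerivAt_im (x : ℍq) : HasFDerivAt Quaternion.im imCLM x := imCLM.hasFDerivAt

def IsStarInvariant (h : ℍq → ℍq) : Prop := ∀ y, h (star y) = h y

lemma isStarInvariant_svalue (f : ℍq → ℍq) : IsStarInvariant (svalue f) := fun y => by
  rw [svalue, svalue, star_star, add_comm]

lemma isStarInvariant_sderiv' (f : ℍq → ℍq) : IsStarInvariant (sderiv' f) := fun y => by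
  rw [sderiv', sderiv', Quaternion.im_star, star_star, mul_neg, inv_neg, neg_mul, ← mul_neg,
    neg_sub]

namespace IsStarInvariant

variable {h : ℍq → ℍq}

lemma svalue_eq (hh : IsStarInvariant h) (x : ℍq) : svalue h x = h x := by
  rw [svalue, hh, div_two_eq_smul]; module

lemma sderiv'_eq_zero (hh : IsStarInvariant h) (x : ℍq) : sderiv' h x = 0 := by
  rw [sderiv', hh, sub_self, mul_zero]

lemma fderiv_star (hh : IsStarInvariant h) (x w : ℍq) :
    fderiv ℝ h (star x) (star w) = fderiv ℝ h x w := by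
  have hcomp : h ∘ starL' ℝ = h := funext hh
  have := congrArg (fun F => F w) ((starL' ℝ : ℍq ≃L[ℝ] ℍq).comp_right_fderiv (f := h) (x := x))
  simpa [hcomp] using this.symm

end IsStarInvariant

section SphericalDecomposition

variable {f : ℍq → ℍq} {x : ℍq}

lemma svalue_add_im_mul_sderiv' (hx : x.im ≠ 0) : svalue f x + x.im * sderiv' f x = f x := by
  rw [sderiv', mul_inv_rev, mul_assoc, mul_inv_cancel_left₀ hx, svalue, div_two_eq_smul,
    two_inv_mul_eq_smul]
  module

lemma svalue_eq_and_sderiv'_eq {a b : ℍq} (hx : x.im ≠ 0) (h₁ : f x = a + x.im * b)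
    (h₂ : f (star x) = a - x.im * b) : svalue f x = a ∧ sderiv' f x = b := by
  constructor
  · rw [svalue, h₁, h₂, div_two_eq_smul]; module
  · rw [sderiv', h₁, h₂, show a + x.im * b - (a - x.im * b) = 2 * x.im * b by noncomm_ring,
      inv_mul_cancel_left₀ (mul_ne_zero two_ne_zero hx)]

end SphericalDecomposition

lemma eventually_im_ne_zero {x : ℍq} (hx : x.im ≠ 0) : ∀ᶠ y in nhds x, y.im ≠ 0 :=
  Quaternion.continuous_im.continuousAt.eventually_ne hx

section Differentiability

variable {f : ℍq → ℍq} {x : ℍq}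

lemma differentiableAt_comp_star (h : DifferentiableAt ℝ f (star x)) :
    DifferentiableAt ℝ (fun y => f (star y)) x :=
  h.comp x (starL' ℝ : ℍq ≃L[ℝ] ℍq).differentiableAt

lemma differentiableAt_svalue (h : DifferentiableAt ℝ f x) (h' : DifferentiableAt ℝ f (star x)) :
    DifferentiableAt ℝ (svalue f) x := by
  have : svalue f = fun y => (2⁻¹ : ℝ) • (f y + f (star y)) := funext fun y => div_two_eq_smul _
  rw [this]
  exact (h.add (differentiableAt_comp_star h')).const_smul (2⁻¹ : ℝ)

lemma differentiableAt_sderiv' (hx : x.im ≠ 0) (h : DifferentiableAt ℝ f x)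
    (h' : DifferentiableAt ℝ f (star x)) : DifferentiableAt ℝ (sderiv' f) x := by
  have hinv : DifferentiableAt ℝ (fun y : ℍq => (2 * y.im)⁻¹) x :=
    (differentiableAt_inv (mul_ne_zero two_ne_zero hx)).comp x
      ((hasFDerivAt_im x).differentiableAt.const_mul 2)
  exact hinv.mul (h.sub (differentiableAt_comp_star h'))

lemma fderiv_apply_eq_svalue_sderiv' (hx : x.im ≠ 0) (hv : DifferentiableAt ℝ (svalue f) x)
    (hs : DifferentiableAt ℝ (sderiv' f) x) (w : ℍq) :
    fderiv ℝ f x w =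
      fderiv ℝ (svalue f) x w + (w.im * sderiv' f x + x.im * fderiv ℝ (sderiv' f) x w) := by
  have hrepr : (fun y => svalue f y + y.im * sderiv' f y) =ᶠ[nhds x] f := by
    filter_upwards [eventually_im_ne_zero hx] with y hy using svalue_add_im_mul_sderiv' hy
  have hd : HasFDerivAt (fun y => svalue f y + y.im * sderiv' f y) _ x :=
    hv.hasFDerivAt.add ((hasFDerivAt_im x).mul' hs.hasFDerivAt)
  rw [← hrepr.fderiv_eq, hd.fderiv]
  simp only [add_apply, smul_apply, smul_eq_mul,
    MulOpposite.smul_eq_mul_unop, MulOpposite.unop_op, imCLM_apply]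
  abel

lemma fderiv_star_apply_star_eq_svalue_sderiv' (hx : x.im ≠ 0)
    (hv : DifferentiableAt ℝ (svalue f) (star x)) (hs : DifferentiableAt ℝ (sderiv' f) (star x))
    (w : ℍq) :
    fderiv ℝ f (star x) (star w) =
      fderiv ℝ (svalue f) x w - (w.im * sderiv' f x + x.im * fderiv ℝ (sderiv' f) x w) := by
  rw [fderiv_apply_eq_svalue_sderiv' (by simpa using hx) hv hs,
    (isStarInvariant_svalue f).fderiv_star, (isStarInvariant_sderiv' f).fderiv_star,
    isStarInvariant_sderiv' f, Quaternion.im_star, Quaternion.im_star]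
  noncomm_ring

end Differentiability

section CullenDerivative

variable {h : ℍq → ℍq} {x : ℍq}

lemma qJ_mul_fderiv_qJ (h : ℍq → ℍq) (x : ℍq) :
    qJ x * fderiv ℝ h x (qJ x) = -(x.im⁻¹ * fderiv ℝ h x x.im) := by
  rw [qJ, map_smul, smul_mul_smul_comm, Quaternion.inv_def, Quaternion.star_im,
    Quaternion.normSq_eq_norm_mul_self, mul_inv, smul_mul_assoc, neg_mul, smul_neg, neg_neg]

lemma cderiv_eq (h : ℍq → ℍq) (x : ℍq) :
    cderiv h x = (1/2 : ℝ) • (fderiv ℝ h x 1 + x.im⁻¹ * fderiv ℝ h x x.im) := by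
  rw [cderiv, qJ_mul_fderiv_qJ, sub_neg_eq_add]

lemma cderivBar_eq (h : ℍq → ℍq) (x : ℍq) :
    cderivBar h x = (1/2 : ℝ) • (fderiv ℝ h x 1 - x.im⁻¹ * fderiv ℝ h x x.im) := by
  rw [cderivBar, qJ_mul_fderiv_qJ, ← sub_eq_add_neg]

lemma cderiv_eq_fderiv_one (h0 : cderivBar h x = 0) : cderiv h x = fderiv ℝ h x 1 := by
  rw [← add_zero (cderiv h x), ← h0, cderiv, cderivBar]
  module

lemma fderiv_im_of_cderivBar_eq_zero (hx : x.im ≠ 0) (h0 : cderivBar h x = 0) :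
    fderiv ℝ h x x.im = x.im * fderiv ℝ h x 1 := by
  rw [cderivBar_eq, smul_eq_zero, sub_eq_zero] at h0
  rw [h0.resolve_left (by norm_num), mul_inv_cancel_left₀ hx]

lemma Filter.EventuallyEq.cderiv_eq {p : ℍq → ℍq} (he : h =ᶠ[nhds x] p) :
    cderiv h x = cderiv p x := by
  rw [cderiv, cderiv, he.fderiv_eq]

end CullenDerivative

lemma IsStarInvariant.svalue_cderiv_and_sderiv'_cderiv {h : ℍq → ℍq} {x : ℍq}
    (hh : IsStarInvariant h) (hx : x.im ≠ 0) :
    svalue (cderiv h) x = (1/2 : ℝ) • fderiv ℝ h x 1 ∧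
      sderiv' (cderiv h) x = (1/2 : ℝ) • ((x.im * x.im)⁻¹ * fderiv ℝ h x x.im) := by
  have hinv : x.im⁻¹ = x.im * (x.im * x.im)⁻¹ := by
    rw [mul_inv_rev, mul_inv_cancel_left₀ hx]
  apply svalue_eq_and_sderiv'_eq hx
  · rw [cderiv_eq, hinv, mul_smul_comm, mul_assoc]; module
  · have h₁ := hh.fderiv_star x 1
    rw [star_one] at h₁
    rw [cderiv_eq, h₁, im_star_eq_star_im, hh.fderiv_star, Quaternion.star_im, inv_neg, hinv,
      mul_smul_comm, neg_mul, mul_assoc]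
    module

lemma IsStarInvariant.cderiv_eq {h : ℍq → ℍq} {x : ℍq} (hh : IsStarInvariant h)
    (hx : x.im ≠ 0) :
    cderiv h x = (1/2 : ℝ) • fderiv ℝ h x 1
      + x.im * ((1/2 : ℝ) • ((x.im * x.im)⁻¹ * fderiv ℝ h x x.im)) := by
  obtain ⟨hv, hs⟩ := hh.svalue_cderiv_and_sderiv'_cderiv hx
  rw [← hv, ← hs, svalue_add_im_mul_sderiv' hx]

structure SliceRegularAt (f : ℍq → ℍq) (x : ℍq) : Prop where
  differentiableAt : DifferentiableAt ℝ f x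
  differentiableAt_star : DifferentiableAt ℝ f (star x)
  cderivBar_eq_zero : cderivBar f x = 0
  cderivBar_star_eq_zero : cderivBar f (star x) = 0

namespace SliceRegularAt

variable {f : ℍq → ℍq} {x : ℍq}

lemma symm (hf : SliceRegularAt f x) : SliceRegularAt f (star x) where
  differentiableAt := hf.differentiableAt_star
  differentiableAt_star := by rw [star_star]; exact hf.differentiableAt
  cderivBar_eq_zero := hf.cderivBar_star_eq_zero
  cderivBar_star_eq_zero := by rw [star_star]; exact hf.cderivBar_eq_zero

lemma differentiableAt_svalue (hf : SliceRegularAt f x) : DifferentiableAt ℝ (svalue f) x :=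
  _root_.differentiableAt_svalue hf.differentiableAt hf.differentiableAt_star

lemma differentiableAt_sderiv' (hf : SliceRegularAt f x) (hx : x.im ≠ 0) :
    DifferentiableAt ℝ (sderiv' f) x :=
  _root_.differentiableAt_sderiv' hx hf.differentiableAt hf.differentiableAt_star

lemma fderiv_star_apply_star (hf : SliceRegularAt f x) (hx : x.im ≠ 0) (w : ℍq) :
    fderiv ℝ f (star x) (star w) =
      fderiv ℝ (svalue f) x w - (w.im * sderiv' f x + x.im * fderiv ℝ (sderiv' f) x w) :=
  fderiv_star_apply_star_eq_svalue_sderiv' hx hf.symm.differentiableAt_svalue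
    (hf.symm.differentiableAt_sderiv' (by simpa using hx)) w

lemma fderiv_apply (hf : SliceRegularAt f x) (hx : x.im ≠ 0) (w : ℍq) :
    fderiv ℝ f x w =
      fderiv ℝ (svalue f) x w + (w.im * sderiv' f x + x.im * fderiv ℝ (sderiv' f) x w) :=
  fderiv_apply_eq_svalue_sderiv' hx hf.differentiableAt_svalue (hf.differentiableAt_sderiv' hx) w

lemma svalue_cderiv_and_sderiv'_cderiv (hf : SliceRegularAt f x) (hx : x.im ≠ 0) :
    svalue (cderiv f) x = fderiv ℝ (svalue f) x 1 ∧
      sderiv' (cderiv f) x = fderiv ℝ (sderiv' f) x 1 := by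
  apply svalue_eq_and_sderiv'_eq hx
  · rw [cderiv_eq_fderiv_one hf.cderivBar_eq_zero, hf.fderiv_apply hx, Quaternion.im_one,
      zero_mul, zero_add]
  · rw [cderiv_eq_fderiv_one hf.symm.cderivBar_eq_zero, ← star_one, hf.fderiv_star_apply_star hx,
      star_one, Quaternion.im_one, zero_mul, zero_add]

lemma fderiv_svalue_im (hf : SliceRegularAt f x) (hx : x.im ≠ 0) :
    fderiv ℝ (svalue f) x x.im = x.im * x.im * fderiv ℝ (sderiv' f) x 1 := by
  have hCR := fderiv_im_of_cderivBar_eq_zero hx hf.cderivBar_eq_zero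
  have hCR' := fderiv_im_of_cderivBar_eq_zero (by simpa using hx) hf.symm.cderivBar_eq_zero
  rw [hf.fderiv_apply hx, hf.fderiv_apply hx, Quaternion.im_idem, Quaternion.im_one] at hCR
  rw [im_star_eq_star_im, ← star_one, hf.fderiv_star_apply_star hx, hf.fderiv_star_apply_star hx,
    Quaternion.im_idem, Quaternion.im_one, Quaternion.star_im] at hCR'
  set v := fderiv ℝ (svalue f) x x.im
  calc v = (2⁻¹ : ℝ) • (v + (x.im * sderiv' f x + x.im * fderiv ℝ (sderiv' f) x x.im)
          + (v - (x.im * sderiv' f x + x.im * fderiv ℝ (sderiv' f) x x.im))) := by module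
    _ = x.im * x.im * fderiv ℝ (sderiv' f) x 1 := by
      rw [hCR, hCR']
      simp only [zero_mul, zero_add, mul_add, mul_sub, neg_mul, ← mul_assoc]
      module

end SliceRegularAt

lemma sderiv'_sprod {f g : ℍq → ℍq} {x : ℍq} (hx : x.im ≠ 0) :
    sderiv' (sprod f g) x = svalue f x * sderiv' g x + sderiv' f x * svalue g x := by
  refine (svalue_eq_and_sderiv'_eq hx rfl ?_).2
  rw [sprod, isStarInvariant_svalue, isStarInvariant_svalue, isStarInvariant_sderiv',
    isStarInvariant_sderiv', Quaternion.im_star]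
  noncomm_ring

lemma IsSliceRegular.sliceRegularAt {Ω : Set ℍq} {f : ℍq → ℍq} {x : ℍq}
    (hf : IsSliceRegular Ω f) (hopen : IsOpen Ω) (hcirc : IsCircular Ω) (hxΩ : x ∈ Ω)
    (hx : x.im ≠ 0) : SliceRegularAt f x := by
  have hxΩ' : star x ∈ Ω := hcirc x hxΩ (star x) (Quaternion.re_star x) (by simp)
  obtain ⟨-, hfd, hfc⟩ := hf
  exact ⟨hfd.differentiableAt (hopen.mem_nhds hxΩ), hfd.differentiableAt (hopen.mem_nhds hxΩ'),
    hfc x hxΩ hx, hfc (star x) hxΩ' (by simpa using hx)⟩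

lemma sderiv'_sprod_eventuallyEq {f g : ℍq → ℍq} {x : ℍq} (hx : x.im ≠ 0) :
    sderiv' (sprod f g) =ᶠ[nhds x]
      fun y => svalue f y * sderiv' g y + sderiv' f y * svalue g y := by
  filter_upwards [eventually_im_ne_zero hx] with y hy using sderiv'_sprod hy

lemma isStarInvariant_svalue_mul_sderiv'_add (f g : ℍq → ℍq) :
    IsStarInvariant fun y => svalue f y * sderiv' g y + sderiv' f y * svalue g y := fun y => by
  dsimp only
  rw [isStarInvariant_svalue f y, isStarInvariant_svalue g y, isStarInvariant_sderiv' f y,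
    isStarInvariant_sderiv' g y]

lemma SliceRegularAt.fderiv_svalue_mul_sderiv'_add {f g : ℍq → ℍq} {x : ℍq}
    (hf : SliceRegularAt f x) (hg : SliceRegularAt g x) (hx : x.im ≠ 0) (w : ℍq) :
    fderiv ℝ (fun y => svalue f y * sderiv' g y + sderiv' f y * svalue g y) x w =
      fderiv ℝ (svalue f) x w * sderiv' g x + svalue f x * fderiv ℝ (sderiv' g) x w
        + (fderiv ℝ (sderiv' f) x w * svalue g x + sderiv' f x * fderiv ℝ (svalue g) x w) := by
  have hvf := hf.differentiableAt_svalue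
  have hsf := hf.differentiableAt_sderiv' hx
  have hvg := hg.differentiableAt_svalue
  have hsg := hg.differentiableAt_sderiv' hx
  rw [fderiv_fun_add (f := fun y => svalue f y * sderiv' g y)
      (g := fun y => sderiv' f y * svalue g y) (hvf.mul hsg) (hsf.mul hvg),
    fderiv_fun_mul' hvf hsg, fderiv_fun_mul' hsf hvg]
  simp only [add_apply, smul_apply, smul_eq_mul, MulOpposite.smul_eq_mul_unop, MulOpposite.unop_op]
  abel

lemma SliceRegularAt.opCS_sprod_eq {f g : ℍq → ℍq} {x : ℍq} (hf : SliceRegularAt f x)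
    (hg : SliceRegularAt g x) (hx : x.im ≠ 0) :
    opCS (sprod f g) x =
      sprod (opCS f) (svalue g) x
        + (1/2 : ℝ) • (sprod (sderiv' f) (cderiv g) x + sprod (cderiv f) (sderiv' g) x)
        + sprod (svalue f) (opCS g) x := by
  rw [opCS, (sderiv'_sprod_eventuallyEq hx).cderiv_eq,
    (isStarInvariant_svalue_mul_sderiv'_add f g).cderiv_eq hx,
    hf.fderiv_svalue_mul_sderiv'_add hg hx, hf.fderiv_svalue_mul_sderiv'_add hg hx]
  obtain ⟨hvsf, hssf⟩ := (isStarInvariant_sderiv' f).svalue_cderiv_and_sderiv'_cderiv hx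
  obtain ⟨hvsg, hssg⟩ := (isStarInvariant_sderiv' g).svalue_cderiv_and_sderiv'_cderiv hx
  obtain ⟨hvcf, hscf⟩ := hf.svalue_cderiv_and_sderiv'_cderiv hx
  obtain ⟨hvcg, hscg⟩ := hg.svalue_cderiv_and_sderiv'_cderiv hx
  simp only [sprod, opCS, hvsf, hssf, hvsg, hssg, hvcf, hscf, hvcg, hscg,
    (isStarInvariant_svalue _).svalue_eq, (isStarInvariant_svalue _).sderiv'_eq_zero,
    (isStarInvariant_sderiv' _).svalue_eq, (isStarInvariant_sderiv' _).sderiv'_eq_zero,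
    hf.fderiv_svalue_im hx, hg.fderiv_svalue_im hx]
  -- `Im(x)²` is real, so it and its inverse become scalars commuting with everything.
  have hc : normSq x.im ≠ 0 := by simpa using hx
  rw [im_mul_im, ← Quaternion.coe_inv]
  simp only [mul_zero, zero_mul, add_zero, zero_add, mul_add, mul_smul_comm, smul_mul_assoc,
    Quaternion.coe_mul_eq_smul, ← mul_assoc, smul_smul, smul_add]
  match_scalars <;> field_simp

/-- first iteration formula for `∂_c∂_s` of a slice product. -/
theorem opCS_sprod (Ω : Set ℍq) (hopen : IsOpen Ω) (hcirc : IsCircular Ω)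
    (f g : ℍq → ℍq) (hf : IsSliceRegular Ω f) (hg : IsSliceRegular Ω g) :
    ∀ x ∈ Ω, x.im ≠ 0 →
      opCS (sprod f g) x =
        sprod (opCS f) (svalue g) x
          + (1/2 : ℝ) • (sprod (sderiv' f) (cderiv g) x + sprod (cderiv f) (sderiv' g) x)
          + sprod (svalue f) (opCS g) x := by
  intro x hxΩ hx
  exact (hf.sliceRegularAt hopen hcirc hxΩ hx).opCS_sprod_eq
    (hg.sliceRegularAt hopen hcirc hxΩ hx) hx
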